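/- Let G be a tournament and let J be the backedge graph of G under some numbering (v_1,…,v_n). Then: (1) if G has a pure pair of order t, then J has a pure pair (in the graph sense) of order at least t/2; and (2) if J has a pure pair (in the graph sense) of order t, then G has a pure pair of order at least t/2. -/

import Mathlib

/-- A tournament on vertex set `Fin n`. -/
structure Tournament (n : ℕ) where
  adj : Fin n → Fin n → Prop
  irrefl : ∀ v, ¬ adj v v
  total : ∀ u v : Fin n, u ≠ v → (adj u v ↔ ¬ adj v u)

namespace Tournament

/-- `G` contains `H` as a subtournament. -/
def Contains {n m : ℕ} (G : Tournament n) (H : Tournament m) : Prop :=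
  ∃ f : Fin m → Fin n, Function.Injective f ∧ ∀ u v, H.adj u v ↔ G.adj (f u) (f v)

/-- `G` has a pure pair of order at least `t`. -/
def HasPurePair {n : ℕ} (G : Tournament n) (t : ℝ) : Prop :=
  ∃ A B : Finset (Fin n), Disjoint A B ∧ (∀ a ∈ A, ∀ b ∈ B, G.adj a b) ∧
    t ≤ A.card ∧ t ≤ B.card

/-- The strong Erdős–Hajnal property for a tournament. -/
def StrongEH {m : ℕ} (H : Tournament m) : Prop :=
  ∃ c : ℝ, 0 < c ∧ ∀ (n : ℕ) (G : Tournament n), ¬ G.Contains H → 1 < n →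
    G.HasPurePair (c * n)

/-- The reverse tournament: all edges reversed. -/
def rev {n : ℕ} (G : Tournament n) : Tournament n where
  adj i j := G.adj j i
  irrefl v := G.irrefl v
  total u v h := by have := G.total v u (Ne.symm h); tauto

/-- Isomorphism of tournaments. -/
def Iso {n m : ℕ} (G : Tournament n) (H : Tournament m) : Prop :=
  ∃ e : Fin n ≃ Fin m, ∀ u v, G.adj u v ↔ H.adj (e u) (e v)

/-- The backedge graph of `H` under the numbering `σ`: position `i` carries the vertex `σ i`,
and positions `i < j` are adjacent iff the vertex `σ i` is adjacent from `σ j` in `H`. -/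
def backedge {m : ℕ} (H : Tournament m) (σ : Equiv.Perm (Fin m)) :
    SimpleGraph (Fin m) where
  Adj i j := (i < j ∧ H.adj (σ j) (σ i)) ∨ (j < i ∧ H.adj (σ i) (σ j))
  symm := by constructor; intro i j h; tauto
  loopless := by constructor; intro i h; rcases h with ⟨h, _⟩ | ⟨h, _⟩ <;> exact absurd h (lt_irrefl i)

/-- The number of backedges of the numbering `σ` of `H`
(the number of edges of the backedge graph). -/
noncomputable def backCount {m : ℕ} (H : Tournament m) (σ : Equiv.Perm (Fin m)) : ℕ :=
  Nat.card {p : Fin m × Fin m | p.1 < p.2 ∧ H.adj (σ p.2) (σ p.1)}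

end Tournament
/-- A pure pair of order at least `t` in a graph. -/
def GHasPurePair {n : ℕ} (G : SimpleGraph (Fin n)) (t : ℝ) : Prop :=
  ∃ A B : Finset (Fin n), Disjoint A B ∧
    ((∀ a ∈ A, ∀ b ∈ B, ¬ G.Adj a b) ∨ (∀ a ∈ A, ∀ b ∈ B, G.Adj a b)) ∧
    t ≤ A.card ∧ t ≤ B.card

/-!
Between positions `i < j` the backedge graph has an edge exactly when the edge of `G` points
backwards. Hence, when every position of `P` precedes every position of `Q`, the pair `(P, Q)` is
anticomplete in the backedge graph iff `σ P ⇒ σ Q` in `G`, and complete iff `σ Q ⇒ σ P`. A pure pair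
of order `t` of either kind shrinks to such an order-separated pair of order `t / 2` by splitting
at a median of one side: one of the two halves of the other side lies beyond the median.
-/

open Finset

namespace Finset

variable {α : Type*} [LinearOrder α]

theorem exists_median_mem {A : Finset α} (hA : A.Nonempty) :
    ∃ x ∈ A, #A ≤ 2 * #{a ∈ A | a ≤ x} ∧ #A ≤ 2 * #{a ∈ A | x ≤ a} := by
  set e := A.orderEmbOfFin rfl
  let k : Fin #A := ⟨#A / 2, Nat.div_lt_self hA.card_pos one_lt_two⟩
  have hk : (k : ℕ) = #A / 2 := rfl
  refine ⟨e k, A.orderEmbOfFin_mem rfl k, ?_, ?_⟩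
  · have hsub : (Iic k).map e.toEmbedding ⊆ {a ∈ A | a ≤ e k} := by
      intro a ha
      obtain ⟨i, hi, rfl⟩ := mem_map.1 ha
      exact mem_filter.2 ⟨A.orderEmbOfFin_mem rfl i, e.le_iff_le.2 (mem_Iic.1 hi)⟩
    have := card_le_card hsub
    rw [card_map, Fin.card_Iic] at this
    omega
  · have hsub : (Ici k).map e.toEmbedding ⊆ {a ∈ A | e k ≤ a} := by
      intro a ha
      obtain ⟨i, hi, rfl⟩ := mem_map.1 ha
      exact mem_filter.2 ⟨A.orderEmbOfFin_mem rfl i, e.le_iff_le.2 (mem_Ici.1 hi)⟩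
    have := card_le_card hsub
    rw [card_map, Fin.card_Ici] at this
    omega

theorem exists_halves_lt_or_gt {A B : Finset α} (hAB : Disjoint A B) {t : ℕ}
    (hA : t ≤ #A) (hB : t ≤ #B) :
    ∃ X ⊆ A, ∃ Y ⊆ B, t ≤ 2 * #X ∧ t ≤ 2 * #Y ∧
      ((∀ x ∈ X, ∀ y ∈ Y, x < y) ∨ (∀ x ∈ X, ∀ y ∈ Y, y < x)) := by
  rcases A.eq_empty_or_nonempty with rfl | hne
  · exact ⟨∅, subset_refl _, ∅, empty_subset _, by simp_all, by simp_all, Or.inl (by simp)⟩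
  obtain ⟨x, hx, hlow, hhigh⟩ := exists_median_mem hne
  have hne' : ∀ a ∈ A, ∀ b ∈ B, a ≠ b := fun a ha b hb hab =>
    disjoint_left.1 hAB ha (hab ▸ hb)
  have hsplit := card_filter_add_card_filter_not (s := B) (x ≤ ·)
  by_cases hup : t ≤ 2 * #{b ∈ B | x ≤ b}
  · refine ⟨{a ∈ A | a ≤ x}, filter_subset _ _, {b ∈ B | x ≤ b}, filter_subset _ _, by omega,
      hup, Or.inl ?_⟩
    intro a ha b hb
    rw [mem_filter] at ha hb
    exact lt_of_le_of_ne (ha.2.trans hb.2) (hne' a ha.1 b hb.1)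
  · refine ⟨{a ∈ A | x ≤ a}, filter_subset _ _, {b ∈ B | ¬x ≤ b}, filter_subset _ _, by omega,
      by omega, Or.inr ?_⟩
    intro a ha b hb
    rw [mem_filter] at ha hb
    exact lt_of_lt_of_le (not_le.1 hb.2) ha.2

end Finset

theorem Nat.cast_div_two_le_of_le_two_mul {K : Type*} [Field K] [LinearOrder K]
    [IsStrictOrderedRing K] {t c : ℕ} (h : t ≤ 2 * c) : (t : K) / 2 ≤ c := by
  rw [div_le_iff₀ two_pos]
  exact_mod_cast (by omega : t ≤ c * 2)

namespace Tournament

variable {n : ℕ} (G : Tournament n) (σ : Equiv.Perm (Fin n)) {i j : Fin n}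

theorem backedge_adj_iff_of_lt (h : i < j) : (G.backedge σ).Adj i j ↔ G.adj (σ j) (σ i) := by
  simp [backedge, h, not_lt.2 h.le]

theorem adj_iff_not_backedge_adj_of_lt (h : i < j) :
    G.adj (σ i) (σ j) ↔ ¬(G.backedge σ).Adj i j := by
  rw [G.backedge_adj_iff_of_lt σ h]
  exact G.total _ _ (σ.injective.ne h.ne)

theorem backedge_hasPurePair_of_hasPurePair {t : ℕ} (h : G.HasPurePair t) :
    GHasPurePair (G.backedge σ) ((t : ℝ) / 2) := by
  obtain ⟨A, B, hAB, hadj, hA, hB⟩ := h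
  have hd := (disjoint_map σ.symm.toEmbedding).2 hAB
  obtain ⟨X, hX, Y, hY, hXt, hYt, hsep⟩ :=
    exists_halves_lt_or_gt hd (by simpa using hA) (by simpa using hB)
  have hadj' : ∀ i ∈ X, ∀ j ∈ Y, G.adj (σ i) (σ j) := fun i hi j hj =>
    hadj _ (by simpa using hX hi) _ (by simpa using hY hj)
  refine ⟨X, Y, hd.mono hX hY, ?_, Nat.cast_div_two_le_of_le_two_mul hXt,
    Nat.cast_div_two_le_of_le_two_mul hYt⟩
  rcases hsep with hlt | hgt
  · exact Or.inl fun i hi j hj =>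
      (G.adj_iff_not_backedge_adj_of_lt σ (hlt i hi j hj)).1 (hadj' i hi j hj)
  · exact Or.inr fun i hi j hj =>
      ((G.backedge σ).adj_comm _ _).1 ((G.backedge_adj_iff_of_lt σ (hgt i hi j hj)).2
        (hadj' i hi j hj))

theorem hasPurePair_of_backedge_pure_of_lt {P Q : Finset (Fin n)}
    (hPQ : ∀ i ∈ P, ∀ j ∈ Q, i < j)
    (hpure : (∀ i ∈ P, ∀ j ∈ Q, ¬(G.backedge σ).Adj i j) ∨
      (∀ i ∈ P, ∀ j ∈ Q, (G.backedge σ).Adj i j))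
    {t : ℕ} (hP : t ≤ 2 * #P) (hQ : t ≤ 2 * #Q) : G.HasPurePair ((t : ℝ) / 2) := by
  have hd : Disjoint (P.map σ.toEmbedding) (Q.map σ.toEmbedding) :=
    (disjoint_map _).2 (disjoint_left.2 fun i hi hi' => lt_irrefl i (hPQ i hi i hi'))
  have hP' : (t : ℝ) / 2 ≤ #(P.map σ.toEmbedding) := by
    simpa using Nat.cast_div_two_le_of_le_two_mul hP
  have hQ' : (t : ℝ) / 2 ≤ #(Q.map σ.toEmbedding) := by
    simpa using Nat.cast_div_two_le_of_le_two_mul hQ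
  rcases hpure with hnone | hall
  · refine ⟨_, _, hd, forall_mem_map.2 fun i hi => forall_mem_map.2 fun j hj => ?_, hP', hQ'⟩
    exact (G.adj_iff_not_backedge_adj_of_lt σ (hPQ i hi j hj)).2 (hnone i hi j hj)
  · refine ⟨_, _, hd.symm, forall_mem_map.2 fun j hj => forall_mem_map.2 fun i hi => ?_, hQ', hP'⟩
    exact (G.backedge_adj_iff_of_lt σ (hPQ i hi j hj)).1 (hall i hi j hj)

theorem hasPurePair_of_backedge_hasPurePair {t : ℕ} (h : GHasPurePair (G.backedge σ) t) :
    G.HasPurePair ((t : ℝ) / 2) := by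
  obtain ⟨A, B, hAB, hpure, hA, hB⟩ := h
  obtain ⟨X, hX, Y, hY, hXt, hYt, hsep⟩ :=
    exists_halves_lt_or_gt hAB (by exact_mod_cast hA) (by exact_mod_cast hB)
  rcases hsep with hlt | hgt
  · exact G.hasPurePair_of_backedge_pure_of_lt σ hlt
      (hpure.imp (fun h i hi j hj => h i (hX hi) j (hY hj))
        (fun h i hi j hj => h i (hX hi) j (hY hj))) hXt hYt
  · exact G.hasPurePair_of_backedge_pure_of_lt σ (fun j hj i hi => hgt i hi j hj)
      (hpure.imp (fun h j hj i hi => fun hji => h i (hX hi) j (hY hj) hji.symm)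
        (fun h j hj i hi => (h i (hX hi) j (hY hj)).symm)) hYt hXt

end Tournament

/-- Pure pairs transfer, with a factor of two, between a tournament `G` and any backedge
graph `J` of `G`. -/
theorem purePair_transfer {n : ℕ} (G : Tournament n) (σ : Equiv.Perm (Fin n)) (t : ℕ) :
    (G.HasPurePair (t : ℝ) → GHasPurePair (G.backedge σ) ((t : ℝ) / 2)) ∧
    (GHasPurePair (G.backedge σ) (t : ℝ) → G.HasPurePair ((t : ℝ) / 2)) :=
  ⟨G.backedge_hasPurePair_of_hasPurePair σ, G.hasPurePair_of_backedge_hasPurePair σ⟩
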